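/- Let π : B → Z be a fibred manifold, β a semi-basic form on B of maximal degree with respect to π, δ_t : Z → B a smooth family of sections with δ_0 = δ, and b(z) = (d/dt)|_{t=0} δ_t(z) the resulting vertical vector field along δ with associated section b̃ of δ⁻¹V B. Then (d/dt)|_{t=0} (δ_t* β) = ⟨ b̃, δ*(d_π β) ⟩, where d_π β is the fibre (vertical) differential of β. -/

import Mathlib

open Function
open scoped Manifold

/-! With `β` read as the fibred map `β̃ : B → Λᵖ EZ`, the pullback `δ_t*β` at `z` is `β (δ t z)`,
so its `t`-derivative is the chain rule along the curve `t ↦ δ t z`. On the vertical vector `b z`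
the fibre differential `d_π β` is the differential of `β̃`. -/

theorem statement10_general
    {EB : Type*} [NormedAddCommGroup EB] [NormedSpace ℝ EB]
    {HB : Type*} [TopologicalSpace HB] (IB : ModelWithCorners ℝ EB HB)
    {B : Type*} [TopologicalSpace B] [ChartedSpace HB B]
    {EZ : Type*} [NormedAddCommGroup EZ] [NormedSpace ℝ EZ]
    {HZ : Type*} [TopologicalSpace HZ] (IZ : ModelWithCorners ℝ EZ HZ)
    {Z : Type*} [TopologicalSpace Z] [ChartedSpace HZ Z]
    (p : ℕ)
    (β : B → ContinuousMultilinearMap ℝ (fun _ : Fin p => EZ) ℝ)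
    (hβ : ContMDiff IB 𝓘(ℝ, ContinuousMultilinearMap ℝ (fun _ : Fin p => EZ) ℝ) (⊤ : ℕ∞) β)
    (δ : ℝ → Z → B)
    (hδ : ContMDiff (𝓘(ℝ, ℝ).prod IZ) IB (⊤ : ℕ∞) (fun q : ℝ × Z => δ q.1 q.2))
    (bvec : ∀ z : Z, TangentSpace IB (δ 0 z))
    (hb : ∀ z, bvec z = mfderiv 𝓘(ℝ, ℝ) IB (fun t => δ t z) 0 (1 : ℝ)) :
    ∀ z : Z,
      mfderiv 𝓘(ℝ, ℝ) 𝓘(ℝ, ContinuousMultilinearMap ℝ (fun _ : Fin p => EZ) ℝ)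
          (fun t => β (δ t z)) 0 (1 : ℝ)
        = mfderiv IB 𝓘(ℝ, ContinuousMultilinearMap ℝ (fun _ : Fin p => EZ) ℝ)
            β (δ 0 z) (bvec z) := by
  intro z
  have hcurve : MDifferentiableAt 𝓘(ℝ, ℝ) IB (fun t => δ t z) 0 :=
    (ContMDiff.curry_left (f := δ) hδ).mdifferentiableAt (by simp)
  rw [hb z]
  exact mfderiv_comp_apply 0 (hβ.mdifferentiableAt (by simp)) hcurve 1

/-- Let `π : B → Z` be a fibred manifold, `β` a semi-basic form on
`B` of maximal degree `p = dim Z` (a family `β_b` of `p`-forms on `T_{π b}Z ≅ EZ`,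
smooth in `b`), `δ_t : Z → B` a smooth family of sections with `δ_0 = δ`, and
`b(z) = (d/dt)|₀ δ_t(z)` the resulting vertical vector field along `δ`.  Then
`(d/dt)|₀ (δ_t*β) = ⟨b̃, δ*(d_π β)⟩`: since `δ_t*β = β̃ ∘ δ_t` (Statement 9),
the `t`-derivative at `0` of `z ↦ β_{δ_t z}` equals the fibre (vertical)
differential of `β̃` evaluated along the vertical vector `b(z)`, i.e. the
derivative of `β` (as a bundle-valued map on `B`) in the direction `b(z)`. -/
theorem statement10
    {EB : Type*} [NormedAddCommGroup EB] [NormedSpace ℝ EB]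
    {HB : Type*} [TopologicalSpace HB] (IB : ModelWithCorners ℝ EB HB)
    {B : Type*} [TopologicalSpace B] [ChartedSpace HB B] [IsManifold IB (⊤ : ℕ∞) B]
    {EZ : Type*} [NormedAddCommGroup EZ] [NormedSpace ℝ EZ]
    {HZ : Type*} [TopologicalSpace HZ] (IZ : ModelWithCorners ℝ EZ HZ)
    {Z : Type*} [TopologicalSpace Z] [ChartedSpace HZ Z] [IsManifold IZ (⊤ : ℕ∞) Z]
    (π : B → Z) (hπ : ContMDiff IB IZ (⊤ : ℕ∞) π)
    (p : ℕ)
    (β : B → ContinuousMultilinearMap ℝ (fun _ : Fin p => EZ) ℝ)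
    (hβ : ContMDiff IB 𝓘(ℝ, ContinuousMultilinearMap ℝ (fun _ : Fin p => EZ) ℝ) (⊤ : ℕ∞) β)
    (δ : ℝ → Z → B)
    (hδ : ContMDiff (𝓘(ℝ, ℝ).prod IZ) IB (⊤ : ℕ∞) (fun q : ℝ × Z => δ q.1 q.2))
    (hsec : ∀ t, π ∘ δ t = id)
    (bvec : ∀ z : Z, TangentSpace IB (δ 0 z))
    (hb : ∀ z, bvec z = mfderiv 𝓘(ℝ, ℝ) IB (fun t => δ t z) 0 (1 : ℝ))
    (hvert : ∀ z, mfderiv IB IZ π (δ 0 z) (bvec z) = 0) :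
    ∀ z : Z,
      mfderiv 𝓘(ℝ, ℝ) 𝓘(ℝ, ContinuousMultilinearMap ℝ (fun _ : Fin p => EZ) ℝ)
          (fun t => β (δ t z)) 0 (1 : ℝ)
        = mfderiv IB 𝓘(ℝ, ContinuousMultilinearMap ℝ (fun _ : Fin p => EZ) ℝ)
            β (δ 0 z) (bvec z) :=
  statement10_general IB IZ p β hβ δ hδ bvec hb
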